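/- Let H₀ be a complex Hilbert space, B ∈ B(H₀) an invertible positive operator with 0 ≤ B ≤ I and ker(I−B) = {0}, and set H = H₀ ⊕ H₀, N = {(x, Bx) : x ∈ H₀}, M = {(x, −Bx) : x ∈ H₀}, 𝓐 = {T ∈ B(H) : TN ⊆ N, TM ⊆ M}, and 𝓑 = {C ⊕ D : C, D ∈ B(H₀)}. Set a = √2/2 and let S be the operator on H with block matrix S = [[B^{−1/2}, 0],[0, B^{1/2}]]·[[aI, −aI],[aI, aI]]. Then S is invertible and 𝓐 = S 𝓑 S^{−1}. -/

import Mathlib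

noncomputable section

variable {H₀ : Type*} [NormedAddCommGroup H₀] [InnerProductSpace ℂ H₀] [CompleteSpace H₀]

/-- The operator on `H₀ ⊕ H₀ = WithLp 2 (H₀ × H₀)` given by the block matrix
`[[A, B], [C, D]]`. -/
def blk (A B C D : H₀ →L[ℂ] H₀) : WithLp 2 (H₀ × H₀) →L[ℂ] WithLp 2 (H₀ × H₀) :=
  (((WithLp.prodContinuousLinearEquiv 2 ℂ H₀ H₀).symm :
      H₀ × H₀ →L[ℂ] WithLp 2 (H₀ × H₀)) ∘L ((A.coprod B).prod (C.coprod D))) ∘L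
    ((WithLp.prodContinuousLinearEquiv 2 ℂ H₀ H₀) : WithLp 2 (H₀ × H₀) →L[ℂ] H₀ × H₀)

/-- The subspace `N = {(u, Bu) : u ∈ H₀}` of `H₀ ⊕ H₀`. -/
def graphN (B : H₀ →L[ℂ] H₀) : Set (WithLp 2 (H₀ × H₀)) :=
  {p | (WithLp.equiv 2 (H₀ × H₀) p).2 = B (WithLp.equiv 2 (H₀ × H₀) p).1}

/-- The subspace `M = {(u, −Bu) : u ∈ H₀}` of `H₀ ⊕ H₀`. -/
def graphM (B : H₀ →L[ℂ] H₀) : Set (WithLp 2 (H₀ × H₀)) :=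
  {p | (WithLp.equiv 2 (H₀ × H₀) p).2 = -(B (WithLp.equiv 2 (H₀ × H₀) p).1)}

/-! With `Q` the rotation by `π/4`, `S⁻¹ = Qᵀ · diag(B^{1/2}, B^{-1/2})`. For `p = (u, v)` the
second coordinate of `S⁻¹ p` is `a (B^{-1/2} v - B^{1/2} u)`, which vanishes iff `v = B u`, and the
first is `a (B^{1/2} u + B^{-1/2} v)`, which vanishes iff `v = -B u`. So `S⁻¹` carries `N` and `M`
onto the two coordinate axes, hence `T` leaves `N` and `M` invariant iff `S⁻¹ T S` leaves both
axes invariant, i.e. iff `S⁻¹ T S` is block diagonal. -/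

theorem Units.image_conj_eq {M : Type*} [MonoidWithZero M] (u : Mˣ) (X : Set M) :
    (fun T => (u : M) * T * Ring.inverse (u : M)) '' X = {T | (↑u⁻¹ : M) * T * u ∈ X} := by
  ext T
  simp only [Ring.inverse_unit, Set.mem_image, Set.mem_ofPred_eq]
  constructor
  · rintro ⟨X₀, hX₀, rfl⟩
    simpa [mul_assoc] using hX₀
  · exact fun h => ⟨_, h, by simp [mul_assoc]⟩

theorem ContinuousLinearMap.mapsTo_conj_iff {R M : Type*} [Semiring R] [TopologicalSpace M]
    [AddCommMonoid M] [Module R M] (u : (M →L[R] M)ˣ) (T : M →L[R] M) (s : Set M) :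
    Set.MapsTo ⇑((↑u⁻¹ : M →L[R] M) * T * u) s s ↔
      Set.MapsTo T (⇑(↑u⁻¹ : M →L[R] M) ⁻¹' s) (⇑(↑u⁻¹ : M →L[R] M) ⁻¹' s) := by
  have hl : ∀ x, (↑u⁻¹ : M →L[R] M) ((u : M →L[R] M) x) = x := (homeomorphOfUnit u).left_inv
  have hr : ∀ y, (u : M →L[R] M) ((↑u⁻¹ : M →L[R] M) y) = y := (homeomorphOfUnit u).right_inv
  refine ⟨fun h y hy => ?_, fun h x hx => h (by simpa [hl] using hx)⟩
  simpa [Set.mem_preimage, hr] using h hy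

theorem WithLp.prod_ext {p : ENNReal} {α β : Type*} {x y : WithLp p (α × β)}
    (h₁ : x.fst = y.fst) (h₂ : x.snd = y.snd) : x = y :=
  (WithLp.ext_iff p).2 (Prod.ext h₁ h₂)

section Blocks

variable {E : Type*} [NormedAddCommGroup E] [InnerProductSpace ℂ E]

@[simp]
lemma blk_apply_fst (A B C D : E →L[ℂ] E) (p : WithLp 2 (E × E)) :
    (blk A B C D p).fst = A p.fst + B p.snd := rfl

@[simp]
lemma blk_apply_snd (A B C D : E →L[ℂ] E) (p : WithLp 2 (E × E)) :
    (blk A B C D p).snd = C p.fst + D p.snd := rfl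

lemma blk_mul_blk (A B C D A' B' C' D' : E →L[ℂ] E) :
    blk A B C D * blk A' B' C' D' =
      blk (A * A' + B * C') (A * B' + B * D') (C * A' + D * C') (C * B' + D * D') := by
  ext1 p
  refine WithLp.prod_ext ?_ ?_ <;>
    simp only [mul_apply_eq_comp, blk_apply_fst, blk_apply_snd, add_apply, map_add] <;> abel

lemma blk_diag_mul_blk_diag (A D A' D' : E →L[ℂ] E) :
    blk A 0 0 D * blk A' 0 0 D' = blk (A * A') 0 0 (D * D') := by
  simp [blk_mul_blk]

lemma blk_one : blk (1 : E →L[ℂ] E) 0 0 1 = 1 := by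
  ext1 p
  refine WithLp.prod_ext ?_ ?_ <;> simp

lemma exists_eq_blk (X : WithLp 2 (E × E) →L[ℂ] WithLp 2 (E × E)) :
    ∃ A B C D : E →L[ℂ] E, X = blk A B C D := by
  let e : E × E →L[ℂ] WithLp 2 (E × E) := (WithLp.prodContinuousLinearEquiv 2 ℂ E E).symm
  refine ⟨WithLp.fstL 2 ℂ E E ∘L X ∘L e ∘L .inl ℂ E E, WithLp.fstL 2 ℂ E E ∘L X ∘L e ∘L .inr ℂ E E,
    WithLp.sndL 2 ℂ E E ∘L X ∘L e ∘L .inl ℂ E E, WithLp.sndL 2 ℂ E E ∘L X ∘L e ∘L .inr ℂ E E, ?_⟩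
  ext1 p
  have hp : p = e (p.fst, 0) + e (0, p.snd) := WithLp.prod_ext (by simp [e]) (by simp [e])
  conv_lhs => rw [hp, map_add]
  refine WithLp.prod_ext ?_ ?_ <;> simp [e]

lemma exists_eq_blk_diag_iff (X : WithLp 2 (E × E) →L[ℂ] WithLp 2 (E × E)) :
    (∃ C D, X = blk C 0 0 D) ↔
      Set.MapsTo X {p | p.snd = 0} {p | p.snd = 0} ∧
        Set.MapsTo X {p | p.fst = 0} {p | p.fst = 0} := by
  constructor
  · rintro ⟨C, D, rfl⟩
    exact ⟨fun p hp => by simp_all, fun p hp => by simp_all⟩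
  · rintro ⟨h₁, h₂⟩
    obtain ⟨A, B, C, D, rfl⟩ := exists_eq_blk X
    have hC : C = 0 := by
      ext x
      simpa using h₁ (x := WithLp.toLp 2 (x, 0)) rfl
    have hB : B = 0 := by
      ext y
      simpa using h₂ (x := WithLp.toLp 2 (0, y)) rfl
    exact ⟨A, D, by rw [hB, hC]⟩

/-- `blkRotation (cos θ) (sin θ)` is the rotation by `θ`. -/
def blkRotation (a b : ℝ) : WithLp 2 (E × E) →L[ℂ] WithLp 2 (E × E) :=
  blk (a • 1) (-(b • 1)) (b • 1) (a • 1)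

lemma blkRotation_mul_blkRotation_neg {a b : ℝ} (h : a * a + b * b = 1) :
    blkRotation (E := E) a b * blkRotation a (-b) = 1 := by
  rw [blkRotation, blkRotation, blk_mul_blk, ← blk_one]
  congr 1 <;> simp [smul_smul, ← add_smul, h, mul_comm, add_comm]

lemma blkRotation_neg_mul_blkRotation {a b : ℝ} (h : a * a + b * b = 1) :
    blkRotation (E := E) a (-b) * blkRotation a b = 1 := by
  simpa using blkRotation_mul_blkRotation_neg (E := E) (b := -b) (by simpa using h)

variable {R Rinv : E →L[ℂ] E} (hRRinv : R * Rinv = 1) (hRinvR : Rinv * R = 1)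
include hRRinv hRinvR

lemma eq_inv_apply_iff {x y : E} : x = Rinv y ↔ y = R x := by
  constructor
  · rintro rfl
    rw [← mul_apply_eq_comp, hRRinv, one_apply_eq_self]
  · rintro rfl
    rw [← mul_apply_eq_comp, hRinvR, one_apply_eq_self]

lemma graphN_eq_preimage {a : ℝ} (ha : a ≠ 0) :
    graphN (R * R) = ⇑(blkRotation a (-a) * blk R 0 0 Rinv : WithLp 2 (E × E) →L[ℂ] _) ⁻¹'
      {p | p.snd = 0} := by
  ext p
  simp only [graphN, blkRotation, WithLp.equiv_apply, WithLp.ofLp_snd, WithLp.ofLp_fst,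
    Set.mem_ofPred_eq, Set.preimage_ofPred_eq, mul_apply_eq_comp, blk_apply_snd, blk_apply_fst,
    zero_apply, add_zero, zero_add, neg_smul, neg_neg, neg_apply, smul_apply, one_apply_eq_self]
  rw [neg_add_eq_zero, smul_right_inj ha, eq_inv_apply_iff hRRinv hRinvR]

lemma graphM_eq_preimage {a : ℝ} (ha : a ≠ 0) :
    graphM (R * R) = ⇑(blkRotation a (-a) * blk R 0 0 Rinv : WithLp 2 (E × E) →L[ℂ] _) ⁻¹'
      {p | p.fst = 0} := by
  ext p
  simp only [graphM, blkRotation, WithLp.equiv_apply, WithLp.ofLp_snd, WithLp.ofLp_fst,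
    Set.mem_ofPred_eq, Set.preimage_ofPred_eq, mul_apply_eq_comp, blk_apply_snd, blk_apply_fst,
    zero_apply, add_zero, zero_add, neg_smul, neg_neg, smul_apply, one_apply_eq_self]
  rw [← smul_add, smul_eq_zero_iff_right ha, add_eq_zero_iff_neg_eq, eq_inv_apply_iff hRRinv hRinvR,
    map_neg]

end Blocks

theorem norms_of_vector_functionals_stmt14_general
    (B : H₀ →L[ℂ] H₀)
    (R Rinv : H₀ →L[ℂ] H₀) (hRsq : R * R = B)
    (hRRinv : R * Rinv = 1) (hRinvR : Rinv * R = 1) :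
    IsUnit (blk Rinv 0 0 R *
        blk ((Real.sqrt 2 / 2) • 1) (-((Real.sqrt 2 / 2) • 1))
          ((Real.sqrt 2 / 2) • 1) ((Real.sqrt 2 / 2) • 1)) ∧
      {T : WithLp 2 (H₀ × H₀) →L[ℂ] WithLp 2 (H₀ × H₀) |
          Set.MapsTo T (graphN B) (graphN B) ∧ Set.MapsTo T (graphM B) (graphM B)} =
        (fun T => (blk Rinv 0 0 R *
              blk ((Real.sqrt 2 / 2) • 1) (-((Real.sqrt 2 / 2) • 1))
                ((Real.sqrt 2 / 2) • 1) ((Real.sqrt 2 / 2) • 1)) * T *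
            Ring.inverse (blk Rinv 0 0 R *
              blk ((Real.sqrt 2 / 2) • 1) (-((Real.sqrt 2 / 2) • 1))
                ((Real.sqrt 2 / 2) • 1) ((Real.sqrt 2 / 2) • 1))) ''
          {T : WithLp 2 (H₀ × H₀) →L[ℂ] WithLp 2 (H₀ × H₀) | ∃ C D, T = blk C 0 0 D} := by
  subst hRsq
  set a : ℝ := Real.sqrt 2 / 2
  have ha : a * a + a * a = 1 := by
    rw [div_mul_div_comm, Real.mul_self_sqrt zero_le_two]; norm_num
  have ha₀ : a ≠ 0 := by positivity
  let d : (WithLp 2 (H₀ × H₀) →L[ℂ] WithLp 2 (H₀ × H₀))ˣ :=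
    ⟨blk Rinv 0 0 R, blk R 0 0 Rinv, by rw [blk_diag_mul_blk_diag, hRinvR, hRRinv, blk_one],
      by rw [blk_diag_mul_blk_diag, hRinvR, hRRinv, blk_one]⟩
  let q : (WithLp 2 (H₀ × H₀) →L[ℂ] WithLp 2 (H₀ × H₀))ˣ :=
    ⟨blkRotation a a, blkRotation a (-a), blkRotation_mul_blkRotation_neg ha,
      blkRotation_neg_mul_blkRotation ha⟩
  refine ⟨(d * q).isUnit, ?_⟩
  rw [show blk Rinv 0 0 R * blk (a • 1) (-(a • 1)) (a • 1) (a • 1) = ↑(d * q) from rfl,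
    Units.image_conj_eq]
  ext T
  simp only [Set.mem_ofPred_eq]
  rw [exists_eq_blk_diag_iff, ContinuousLinearMap.mapsTo_conj_iff,
    ContinuousLinearMap.mapsTo_conj_iff, graphN_eq_preimage hRRinv hRinvR ha₀,
    graphM_eq_preimage hRRinv hRinvR ha₀]
  rfl

/-- Let `B` be an invertible positive contraction on `H₀` with
`ker (I−B) = {0}`, and let `R = B^{1/2}` be its (unique) positive square root, with
inverse `Rinv = B^{−1/2}`.  With `a = √2/2` and
`S = [[B^{−1/2}, 0], [0, B^{1/2}]] · [[aI, −aI], [aI, aI]]`, the operator `S` is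
invertible and the algebra `𝓐` of operators leaving `N = {(u, Bu)}` and
`M = {(u, −Bu)}` invariant equals `S 𝓑 S⁻¹`, where `𝓑` is the algebra of
block-diagonal operators. -/
theorem norms_of_vector_functionals_stmt14
    (B : H₀ →L[ℂ] H₀) (hBpos : B.IsPositive) (hB1 : ((1 : H₀ →L[ℂ] H₀) - B).IsPositive)
    (hBunit : IsUnit B) (hBker : LinearMap.ker (((1 : H₀ →L[ℂ] H₀) - B : H₀ →L[ℂ] H₀) : H₀ →ₗ[ℂ] H₀) = ⊥)
    (R Rinv : H₀ →L[ℂ] H₀) (hRpos : R.IsPositive) (hRsq : R * R = B)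
    (hRRinv : R * Rinv = 1) (hRinvR : Rinv * R = 1) :
    IsUnit (blk Rinv 0 0 R *
        blk ((Real.sqrt 2 / 2) • 1) (-((Real.sqrt 2 / 2) • 1))
          ((Real.sqrt 2 / 2) • 1) ((Real.sqrt 2 / 2) • 1)) ∧
      {T : WithLp 2 (H₀ × H₀) →L[ℂ] WithLp 2 (H₀ × H₀) |
          Set.MapsTo T (graphN B) (graphN B) ∧ Set.MapsTo T (graphM B) (graphM B)} =
        (fun T => (blk Rinv 0 0 R *
              blk ((Real.sqrt 2 / 2) • 1) (-((Real.sqrt 2 / 2) • 1))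
                ((Real.sqrt 2 / 2) • 1) ((Real.sqrt 2 / 2) • 1)) * T *
            Ring.inverse (blk Rinv 0 0 R *
              blk ((Real.sqrt 2 / 2) • 1) (-((Real.sqrt 2 / 2) • 1))
                ((Real.sqrt 2 / 2) • 1) ((Real.sqrt 2 / 2) • 1))) ''
          {T : WithLp 2 (H₀ × H₀) →L[ℂ] WithLp 2 (H₀ × H₀) | ∃ C D, T = blk C 0 0 D} :=
  norms_of_vector_functionals_stmt14_general B R Rinv hRsq hRRinv hRinvR
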